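/- (The sup metric on rational step functions) The function d∞ f g := ‖map2 (·−·) f g‖∞ on S ℚ satisfies the axioms of a metric with respect to the lifted equality ≍: for all f, g, h : S ℚ, (i) 0 ≤ d∞ f g; (ii) d∞ f f = 0; (iii) d∞ f g = d∞ g f; (iv) d∞ f h ≤ d∞ f g + d∞ g h; and (v) d∞ f g = 0 → f ≍ g. -/

import Mathlib

set_option linter.unusedVariables false

/-- Rationals strictly between 0 and 1. -/
abbrev OO : Type := {q : ℚ // 0 < q ∧ q < 1}

/-- Rational step functions on the unit interval with values in `X`. -/
inductive S (X : Type) : Type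
  | const : X → S X
  | glue : OO → S X → S X → S X

namespace S

def divO (a o : OO) (h : a.1 < o.1) : OO :=
  ⟨a.1 / o.1, div_pos a.2.1 o.2.1, (div_lt_one o.2.1).2 h⟩

def subO (a o : OO) (h : o.1 < a.1) : OO :=
  ⟨(a.1 - o.1) / (1 - o.1),
    div_pos (by linarith) (by linarith [o.2.2]),
    (div_lt_one (by linarith [o.2.2])).2 (by linarith [a.2.2])⟩

/-- Left split: the part of the step function on `[0,a]`, rescaled to `[0,1]`. -/
def splitL {X : Type} : S X → OO → S X
  | const x, _ => const x
  | glue o f g, a =>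
      if h : a.1 < o.1 then splitL f (divO a o h)
      else if h' : o.1 < a.1 then glue (divO o a h') f (splitL g (subO a o h'))
      else f

/-- Right split: the part of the step function on `[a,1]`, rescaled to `[0,1]`. -/
def splitR {X : Type} : S X → OO → S X
  | const x, _ => const x
  | glue o f g, a =>
      if h : a.1 < o.1 then glue (subO o a h) (splitR f (divO a o h)) g
      else if h' : o.1 < a.1 then splitR g (subO a o h')
      else g

/-- The catamorphism (fold) for step functions. -/
def fold {X Y : Type} (φ : X → Y) (ψ : OO → Y → Y → Y) : S X → Y
  | const x => φ x
  | glue o f g => ψ o (fold φ ψ f) (fold φ ψ g)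

/-- `map` for step functions. -/
def mapS {X Y : Type} (f : X → Y) : S X → S Y
  | const x => const (f x)
  | glue o l r => glue o (mapS f l) (mapS f r)

/-- The applicative `ap` (pointwise application) for step functions. -/
def ap {X Y : Type} : S (X → Y) → S X → S Y
  | const f, x => mapS f x
  | glue o fl fr, x => glue o (ap fl (splitL x o)) (ap fr (splitR x o))

/-- Binary map. -/
def map2 {X Y Z : Type} (f : X → Y → Z) (a : S X) (b : S Y) : S Z :=
  ap (mapS f a) b

/-- `fold⋆`: a step function of propositions holds everywhere. -/
def foldStar : S Prop → Prop := fold id (fun _ p q => p ∧ q)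

/-- Lifting of a relation to step functions: it holds pointwise everywhere. -/
def liftRel {X Y : Type} (R : X → Y → Prop) (f : S X) (g : S Y) : Prop :=
  foldStar (map2 R f g)

/-- The equivalence `≍` on step functions: the lifting of equality. -/
def equivS {X : Type} (f g : S X) : Prop := liftRel Eq f g

def foldSup : S ℚ → ℚ := fold id (fun _ x y => max x y)

def foldAffine : S ℚ → ℚ := fold id (fun o x y => o.1 * x + (1 - o.1) * y)

def normInf (f : S ℚ) : ℚ := foldSup (mapS (fun q => |q|) f)

def normOne (f : S ℚ) : ℚ := foldAffine (mapS (fun q => |q|) f)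

def dInf (f g : S ℚ) : ℚ := normInf (map2 (· - ·) f g)

def dOne (f g : S ℚ) : ℚ := normOne (map2 (· - ·) f g)

end S

open S

/-!
Read a step function as a function on `(0, 1]`: `glue o l r` is `l` on `(0, o]` and `r` on
`(o, 1]`, each rescaled affinely to `(0, 1]`. Under this reading `splitL`, `splitR`, `ap` and
`map2` act pointwise, `foldSup` is a maximum that is attained, and `fold⋆` holds as soon as its
argument holds at every point. Hence `dInf f g = max_t |f t - g t|` with the maximum attained,
and the metric axioms are those of `|x - y|` on `ℚ`, checked at a point where the maximum is
attained.
-/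

open Set

section Rescale

variable {K : Type*} [Field K] [LinearOrder K] [IsStrictOrderedRing K] {o t : K}

lemma div_mem_Ioc_zero_one (ho : 0 < o) (ht : t ∈ Ioc 0 o) : t / o ∈ Ioc (0 : K) 1 :=
  ⟨div_pos ht.1 ho, (div_le_one ho).2 ht.2⟩

lemma sub_div_one_sub_mem_Ioc_zero_one (ht : t ∈ Ioc o 1) :
    (t - o) / (1 - o) ∈ Ioc (0 : K) 1 := by
  have h1o : 0 < 1 - o := by linarith [ht.1, ht.2]
  exact ⟨div_pos (by linarith [ht.1]) h1o, (div_le_one h1o).2 (by linarith [ht.2])⟩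

lemma mul_mem_Ioc_zero_one (ho : o ∈ Ioc (0 : K) 1) (ht : t ∈ Ioc (0 : K) 1) :
    t * o ∈ Ioc (0 : K) 1 :=
  ⟨mul_pos ht.1 ho.1, mul_le_one₀ ht.2 ho.1.le ho.2⟩

lemma add_mul_one_sub_mem_Ioc_zero_one (ho : o ∈ Ico (0 : K) 1) (ht : t ∈ Ioc (0 : K) 1) :
    o + t * (1 - o) ∈ Ioc (0 : K) 1 :=
  ⟨by nlinarith [ht.1, ho.1, ho.2], by nlinarith [ht.2, ho.2]⟩

end Rescale

namespace S

variable {X Y : Type}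

def eval : S X → ℚ → X
  | const x, _ => x
  | glue o l r, t => if t ≤ o.1 then eval l (t / o.1) else eval r ((t - o.1) / (1 - o.1))

lemma eval_glue_of_le (o : OO) (l r : S X) {t : ℚ} (ht : t ≤ o.1) :
    eval (glue o l r) t = eval l (t / o.1) :=
  if_pos ht

lemma eval_glue_of_lt (o : OO) (l r : S X) {t : ℚ} (ht : o.1 < t) :
    eval (glue o l r) t = eval r ((t - o.1) / (1 - o.1)) :=
  if_neg ht.not_ge

lemma eval_glue_mul (o : OO) (l r : S X) {t : ℚ} (ht : t ≤ 1) :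
    eval (glue o l r) (t * o.1) = eval l t := by
  rw [eval_glue_of_le _ _ _ (by nlinarith [o.2.1]), mul_div_cancel_right₀ _ o.2.1.ne']

lemma eval_glue_add_mul (o : OO) (l r : S X) {t : ℚ} (ht : 0 < t) :
    eval (glue o l r) (o.1 + t * (1 - o.1)) = eval r t := by
  have h1o : (1 : ℚ) - o.1 ≠ 0 := by linarith [o.2.2]
  rw [eval_glue_of_lt _ _ _ (by nlinarith [o.2.2]), add_sub_cancel_left,
    mul_div_cancel_right₀ _ h1o]

lemma eval_mapS (φ : X → Y) (x : S X) (t : ℚ) : eval (mapS φ x) t = φ (eval x t) := by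
  induction x generalizing t with
  | const x => rfl
  | glue o l r ihl ihr =>
    simp only [mapS, eval]
    split
    · exact ihl _
    · exact ihr _

lemma eval_splitL (x : S X) (a : OO) {t : ℚ} (ht : t ∈ Ioc (0 : ℚ) 1) :
    eval (splitL x a) t = eval x (t * a.1) := by
  induction x generalizing a t with
  | const x => rfl
  | glue o l r ihl ihr =>
    have hta : t * a.1 ≤ a.1 := by nlinarith [ht.2, a.2.1]
    rcases lt_trichotomy a.1 o.1 with hao | hao | hoa
    · rw [splitL, dif_pos hao, ihl _ ht, eval_glue_of_le _ _ _ (hta.trans hao.le)]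
      simp only [divO, mul_div_assoc]
    · obtain rfl : a = o := Subtype.ext hao
      rw [splitL, dif_neg (lt_irrefl _), dif_neg (lt_irrefl _), eval_glue_mul _ _ _ ht.2]
    · rw [splitL, dif_neg hoa.not_gt, dif_pos hoa]
      by_cases hto : t ≤ o.1 / a.1
      · have h : t * a.1 ≤ o.1 := (le_div_iff₀ a.2.1).1 hto
        rw [eval_glue_of_le _ _ _ hto, eval_glue_of_le _ _ _ h]
        simp only [divO, div_div_eq_mul_div]
      · have h : o.1 < t * a.1 := lt_of_not_ge fun h => hto ((le_div_iff₀ a.2.1).2 h)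
        have hmem : t ∈ Ioc (o.1 / a.1) 1 := ⟨lt_of_not_ge hto, ht.2⟩
        rw [eval_glue_of_lt _ _ _ (lt_of_not_ge hto), eval_glue_of_lt _ _ _ h]
        simp only [divO]
        rw [ihr _ (sub_div_one_sub_mem_Ioc_zero_one hmem)]
        simp only [subO]
        congr 1
        have ha : a.1 ≠ 0 := a.2.1.ne'
        have hao : a.1 - o.1 ≠ 0 := by linarith
        have h1oa : 1 - o.1 / a.1 ≠ 0 := by rw [one_sub_div ha]; exact div_ne_zero hao ha
        field_simp

lemma eval_splitR (x : S X) (a : OO) {t : ℚ} (ht : t ∈ Ioc (0 : ℚ) 1) :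
    eval (splitR x a) t = eval x (a.1 + t * (1 - a.1)) := by
  induction x generalizing a t with
  | const x => rfl
  | glue o l r ihl ihr =>
    have hta : a.1 ≤ a.1 + t * (1 - a.1) := by nlinarith [ht.1, a.2.2]
    have h1a : (1 : ℚ) - a.1 ≠ 0 := by linarith [a.2.2]
    have h1o : (1 : ℚ) - o.1 ≠ 0 := by linarith [o.2.2]
    rcases lt_trichotomy a.1 o.1 with hao | hao | hoa
    · rw [splitR, dif_pos hao]
      have ho : o.1 ≠ 0 := o.2.1.ne'
      have h1oa : 1 - (o.1 - a.1) / (1 - a.1) ≠ 0 := by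
        rw [one_sub_div h1a]; exact div_ne_zero (by linarith [o.2.2]) h1a
      by_cases hto : t ≤ (subO o a hao).1
      · have h : a.1 + t * (1 - a.1) ≤ o.1 := by
          have := (le_div_iff₀ (by linarith [a.2.2])).1 hto
          linarith
        rw [eval_glue_of_le _ _ _ hto, eval_glue_of_le _ _ _ h,
          ihl _ (div_mem_Ioc_zero_one (subO o a hao).2.1 ⟨ht.1, hto⟩)]
        simp only [divO, subO]
        congr 1
        field_simp
      · have h : o.1 < a.1 + t * (1 - a.1) := by
          have := (div_lt_iff₀ (by linarith [a.2.2])).1 (lt_of_not_ge hto)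
          linarith
        rw [eval_glue_of_lt _ _ _ (lt_of_not_ge hto), eval_glue_of_lt _ _ _ h]
        simp only [subO]
        congr 1
        rw [div_eq_div_iff h1oa h1o]
        field_simp
        ring
    · obtain rfl : a = o := Subtype.ext hao
      rw [splitR, dif_neg (lt_irrefl _), dif_neg (lt_irrefl _), eval_glue_add_mul _ _ _ ht.1]
    · rw [splitR, dif_neg hoa.not_gt, dif_pos hoa, ihr _ ht,
        eval_glue_of_lt _ _ _ (hoa.trans_le hta)]
      simp only [subO]
      congr 1
      field_simp
      ring

lemma eval_ap (φs : S (X → Y)) (x : S X) {t : ℚ} (ht : t ∈ Ioc (0 : ℚ) 1) :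
    eval (ap φs x) t = eval φs t (eval x t) := by
  induction φs generalizing x t with
  | const φ => exact eval_mapS φ x t
  | glue o φl φr ihl ihr =>
    rcases le_or_gt t o.1 with hto | hot
    · have hmem := div_mem_Ioc_zero_one o.2.1 ⟨ht.1, hto⟩
      rw [ap, eval_glue_of_le _ _ _ hto, eval_glue_of_le _ _ _ hto, ihl _ hmem,
        eval_splitL _ _ hmem, div_mul_cancel₀ _ o.2.1.ne']
    · have hmem := sub_div_one_sub_mem_Ioc_zero_one ⟨hot, ht.2⟩
      have h1o : (1 : ℚ) - o.1 ≠ 0 := by linarith [o.2.2]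
      rw [ap, eval_glue_of_lt _ _ _ hot, eval_glue_of_lt _ _ _ hot, ihr _ hmem,
        eval_splitR _ _ hmem, div_mul_cancel₀ _ h1o, add_sub_cancel]

lemma eval_map2 {Z : Type} (φ : X → Y → Z) (x : S X) (y : S Y) {t : ℚ}
    (ht : t ∈ Ioc (0 : ℚ) 1) : eval (map2 φ x y) t = φ (eval x t) (eval y t) := by
  rw [map2, eval_ap _ _ ht, eval_mapS]

lemma eval_le_foldSup (f : S ℚ) {t : ℚ} (ht : t ∈ Ioc (0 : ℚ) 1) :
    eval f t ≤ foldSup f := by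
  induction f generalizing t with
  | const q => exact le_rfl
  | glue o l r ihl ihr =>
    rcases le_or_gt t o.1 with hto | hot
    · rw [eval_glue_of_le _ _ _ hto]
      exact le_max_of_le_left (ihl (div_mem_Ioc_zero_one o.2.1 ⟨ht.1, hto⟩))
    · rw [eval_glue_of_lt _ _ _ hot]
      exact le_max_of_le_right (ihr (sub_div_one_sub_mem_Ioc_zero_one ⟨hot, ht.2⟩))

lemma exists_eval_eq_foldSup (f : S ℚ) : ∃ t ∈ Ioc (0 : ℚ) 1, eval f t = foldSup f := by
  induction f with
  | const q => exact ⟨1, ⟨one_pos, le_rfl⟩, rfl⟩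
  | glue o l r ihl ihr =>
    change ∃ t ∈ Ioc (0 : ℚ) 1, _ = max (foldSup l) (foldSup r)
    rcases le_total (foldSup r) (foldSup l) with hrl | hlr
    · obtain ⟨t, ht, hl⟩ := ihl
      exact ⟨t * o.1, mul_mem_Ioc_zero_one ⟨o.2.1, o.2.2.le⟩ ht,
        by rw [eval_glue_mul _ _ _ ht.2, hl, max_eq_left hrl]⟩
    · obtain ⟨t, ht, hr⟩ := ihr
      exact ⟨o.1 + t * (1 - o.1), add_mul_one_sub_mem_Ioc_zero_one ⟨o.2.1.le, o.2.2⟩ ht,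
        by rw [eval_glue_add_mul _ _ _ ht.1, hr, max_eq_right hlr]⟩

lemma foldStar_of_forall_eval (P : S Prop) (hP : ∀ t ∈ Ioc (0 : ℚ) 1, eval P t) :
    foldStar P := by
  induction P with
  | const p => exact hP 1 ⟨one_pos, le_rfl⟩
  | glue o l r ihl ihr =>
    refine ⟨ihl fun t ht => ?_, ihr fun t ht => ?_⟩
    · simpa only [eval_glue_mul _ _ _ ht.2] using
        hP _ (mul_mem_Ioc_zero_one ⟨o.2.1, o.2.2.le⟩ ht)
    · simpa only [eval_glue_add_mul _ _ _ ht.1] using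
        hP _ (add_mul_one_sub_mem_Ioc_zero_one ⟨o.2.1.le, o.2.2⟩ ht)

lemma abs_eval_sub_le_dInf (f g : S ℚ) {t : ℚ} (ht : t ∈ Ioc (0 : ℚ) 1) :
    |eval f t - eval g t| ≤ dInf f g := by
  have := eval_le_foldSup (mapS (fun q => |q|) (map2 (· - ·) f g)) ht
  rwa [eval_mapS, eval_map2 _ _ _ ht] at this

lemma exists_abs_eval_sub_eq_dInf (f g : S ℚ) :
    ∃ t ∈ Ioc (0 : ℚ) 1, |eval f t - eval g t| = dInf f g := by
  obtain ⟨t, ht, hmax⟩ := exists_eval_eq_foldSup (mapS (fun q => |q|) (map2 (· - ·) f g))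
  rw [eval_mapS, eval_map2 _ _ _ ht] at hmax
  exact ⟨t, ht, hmax⟩

lemma dInf_nonneg (f g : S ℚ) : 0 ≤ dInf f g :=
  (abs_nonneg _).trans (abs_eval_sub_le_dInf f g ⟨one_pos, le_rfl⟩)

lemma dInf_self (f : S ℚ) : dInf f f = 0 := by
  obtain ⟨t, -, ht⟩ := exists_abs_eval_sub_eq_dInf f f
  rw [← ht, sub_self, abs_zero]

lemma dInf_le_dInf_swap (f g : S ℚ) : dInf f g ≤ dInf g f := by
  obtain ⟨t, ht, hfg⟩ := exists_abs_eval_sub_eq_dInf f g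
  rw [← hfg, abs_sub_comm]
  exact abs_eval_sub_le_dInf g f ht

lemma dInf_comm (f g : S ℚ) : dInf f g = dInf g f :=
  (dInf_le_dInf_swap f g).antisymm (dInf_le_dInf_swap g f)

lemma dInf_triangle (f g h : S ℚ) : dInf f h ≤ dInf f g + dInf g h := by
  obtain ⟨t, ht, hfh⟩ := exists_abs_eval_sub_eq_dInf f h
  calc dInf f h = |eval f t - eval h t| := hfh.symm
    _ ≤ |eval f t - eval g t| + |eval g t - eval h t| := abs_sub_le _ _ _
    _ ≤ dInf f g + dInf g h :=
      add_le_add (abs_eval_sub_le_dInf f g ht) (abs_eval_sub_le_dInf g h ht)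

lemma equivS_of_dInf_eq_zero {f g : S ℚ} (hfg : dInf f g = 0) : equivS f g := by
  refine foldStar_of_forall_eval _ fun t ht => ?_
  rw [eval_map2 _ _ _ ht]
  have := abs_eval_sub_le_dInf f g ht
  rw [hfg] at this
  exact sub_eq_zero.1 (abs_nonpos_iff.1 this)

end S

/-- The sup metric `d∞` on rational step functions satisfies the metric axioms
with respect to the lifted equality. -/
theorem dInf_is_metric (f g h : S ℚ) :
    0 ≤ dInf f g ∧
    dInf f f = 0 ∧
    dInf f g = dInf g f ∧
    dInf f h ≤ dInf f g + dInf g h ∧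
    (dInf f g = 0 → equivS f g) :=
  ⟨dInf_nonneg f g, dInf_self f, dInf_comm f g, dInf_triangle f g h, equivS_of_dInf_eq_zero⟩
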